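/- arXiv:1809.06792 — 5 statements merged into one kernel-verified Lean document; each statement's English description precedes it below -/
import Mathlib

section
/- Let α, β, κ be partitions with α ≻ κ ≺ β (i.e. κ ⊆ α, κ ⊆ β with interlacing α_i ≥ κ_i ≥ α_{i+1} and β_i ≥ κ_i ≥ β_{i+1}), and let G ∈ ℕ. Define ν by ν_1 = max(α_1, β_1) + G and ν_s = max(α_s, β_s) + min(α_{s-1}, β_{s-1}) − κ_{s-1} for s ≥ 2. Then ν is a partition satisfying α ≺ ν ≻ β. -/
open scoped Classical

noncomputable section

/-! ## Partitions and interlacing -/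

def IsPartition (a : ℕ → ℕ) : Prop :=
  (∀ i, a (i + 1) ≤ a i) ∧ ∃ N, ∀ i, N ≤ i → a i = 0

/-- `Interlaces μ lam` means μ ≺ lam, i.e. lam_{i+1} ≤ μ_i ≤ lam_i (0-indexed). -/
def Interlaces (μ lam : ℕ → ℕ) : Prop :=
  ∀ i, lam (i + 1) ≤ μ i ∧ μ i ≤ lam i

def psum (a : ℕ → ℕ) : ℕ := ∑' i, a i

def plen (a : ℕ → ℕ) : ℕ := sInf {N | ∀ i, N ≤ i → a i = 0}

/-! ## rowRSK local rule -/

def rowRSK (α β κ : ℕ → ℕ) (G : ℕ) : ℕ → ℕ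
  | 0 => max (α 0) (β 0) + G
  | s + 1 => max (α (s + 1)) (β (s + 1)) + min (α s) (β s) - κ s

/-! ## colRSK local rule -/

def Gdesc (α β κ : ℕ → ℕ) (G L : ℕ) : ℕ → ℕ
  | 0 => G
  | k + 1 =>
      Gdesc α β κ G L k -
          min (Gdesc α β κ G L k) (κ (L - (k + 1)) - max (α (L - (k + 1) + 1)) (β (L - (k + 1) + 1)))
        + (min (α (L - (k + 1))) (β (L - (k + 1))) - κ (L - (k + 1)))

def colG (α β κ : ℕ → ℕ) (G s : ℕ) : ℕ :=
  Gdesc α β κ G (min (plen α) (plen β)) (min (plen α) (plen β) - s)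

def colRSK (α β κ : ℕ → ℕ) (G : ℕ) : ℕ → ℕ
  | 0 => max (α 0) (β 0) + colG α β κ G 0
  | s + 1 => min (max (α (s + 1)) (β (s + 1)) + colG α β κ G (s + 1)) (κ s)

def colGi (α β ν : ℕ → ℕ) : ℕ → ℕ
  | 0 => ν 0 - max (α 0) (β 0)
  | s + 1 =>
      ν (s + 1) + colGi α β ν s + max (min (α s) (β s) - colGi α β ν s) (ν (s + 1))
        - max (α (s + 1)) (β (s + 1)) - min (α s) (β s)

def colKinv (α β ν : ℕ → ℕ) (s : ℕ) : ℕ :=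
  max (min (α s) (β s) - colGi α β ν s) (ν (s + 1))

def colGout (α β ν : ℕ → ℕ) : ℕ := colGi α β ν (min (plen α) (plen β))

/-! ## Statements 0,1,2 -/

instance : TopologicalSpace (MvPowerSeries (Fin 2) ℚ) :=
  (inferInstance : TopologicalSpace ((Fin 2 →₀ ℕ) → ℚ))

def IsGT (n : ℕ) (z : ℕ → ℕ → ℕ) : Prop :=
  (∀ i j, n ≤ i ∨ i < j → z i j = 0) ∧
  (∀ i j, i + 1 < n → j ≤ i → z (i + 1) (j + 1) ≤ z i j ∧ z i j ≤ z (i + 1) j)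

def gtType (z : ℕ → ℕ → ℕ) (i : ℕ) : ℕ :=
  (∑ j ∈ Finset.range (i + 1), z i j) - ∑ j ∈ Finset.range i, z (i - 1) j

def hpolyN (n k : ℕ) : MvPolynomial ℕ ℚ :=
  ∑ f ∈ Finset.univ.filter (fun f : Fin k → Fin n => Monotone f),
    ∏ j : Fin k, MvPolynomial.X ((f j : ℕ) + 1)

def hZN (n : ℕ) (e : ℤ) : MvPolynomial ℕ ℚ := if 0 ≤ e then hpolyN n e.toNat else 0

def schurN (n : ℕ) (μ : YoungDiagram) : MvPolynomial ℕ ℚ :=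
  Matrix.det (Matrix.of fun i j : Fin (μ.colLen 0) =>
    hZN n ((μ.rowLen (i : ℕ) : ℤ) - ((i : ℕ) : ℤ) + ((j : ℕ) : ℤ)))

abbrev LP : Type := AddMonoidAlgebra ℚ (ℕ →₀ ℤ)

def lpX (i : ℕ) (e : ℤ) : LP := AddMonoidAlgebra.single (Finsupp.single i e) 1

def hListLP (l : List LP) (k : ℕ) : LP :=
  ∑ f ∈ Finset.univ.filter (fun f : Fin k → Fin l.length => Monotone f),
    ∏ j : Fin k, l.get (f j)

def hZLP (l : List LP) (e : ℤ) : LP := if 0 ≤ e then hListLP l e.toNat else 0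

def varsSp (n : ℕ) : List LP := (List.range n).flatMap fun i => [lpX (i + 1) 1, lpX (i + 1) (-1)]

def varsSO (n : ℕ) : List LP := varsSp n ++ [1]

def varsS (n : ℕ) : List LP := (List.range n).map fun i => lpX (i + 1) 1

def spChar (n : ℕ) (lam : ℕ → ℕ) : LP :=
  (1 / 2 : ℚ) • Matrix.det (Matrix.of fun i j : Fin n =>
    hZLP (varsSp n) ((lam (i : ℕ) : ℤ) - ((i : ℕ) : ℤ) + ((j : ℕ) : ℤ)) +
      hZLP (varsSp n) ((lam (i : ℕ) : ℤ) - ((i : ℕ) : ℤ) - ((j : ℕ) : ℤ)))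

def soChar (n : ℕ) (lam : ℕ → ℕ) : LP :=
  Matrix.det (Matrix.of fun i j : Fin n =>
    hZLP (varsSO n) ((lam (i : ℕ) : ℤ) - ((i : ℕ) : ℤ) + ((j : ℕ) : ℤ)) -
      hZLP (varsSO n) ((lam (i : ℕ) : ℤ) - ((i : ℕ) : ℤ) - ((j : ℕ) : ℤ) - 2))

def schurLP (n : ℕ) (lam : ℕ → ℕ) : LP :=
  Matrix.det (Matrix.of fun i j : Fin n =>
    hZLP (varsS n) ((lam (i : ℕ) : ℤ) - ((i : ℕ) : ℤ) + ((j : ℕ) : ℤ)))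

def rect (n v : ℕ) : ℕ → ℕ := fun i => if i < n then v else 0

def UpRight (p : ℕ → ℕ × ℕ) (m : ℕ) : Prop :=
  ∀ k < m, p (k + 1) = ((p k).1 + 1, (p k).2) ∨ p (k + 1) = ((p k).1, (p k).2 + 1)

def domP2PR (n : ℕ) : Finset (ℕ × ℕ) :=
  (Finset.Icc 1 n ×ˢ Finset.Icc 1 n).filter fun q => q.2 ≤ q.1

def wtP2PR (n : ℕ) (W : ℕ × ℕ → ℕ) : MvPolynomial ℕ ℚ :=
  ∏ q ∈ domP2PR n,
    (if q.1 = q.2 then MvPolynomial.X q.1 else MvPolynomial.X q.1 * MvPolynomial.X q.2) ^ W q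

def PathP2PR (n : ℕ) (p : ℕ → ℕ × ℕ) : Prop :=
  p 0 = (1, 1) ∧ p (2 * n - 2) = (n, n) ∧ UpRight p (2 * n - 2) ∧
    ∀ k ≤ 2 * n - 2, p k ∈ domP2PR n

def WsetP2PR (n u : ℕ) : Set ((ℕ × ℕ) → ℕ) :=
  {W | (∀ q ∉ domP2PR n, W q = 0) ∧
    ∀ p, PathP2PR n p → ∑ k ∈ Finset.range (2 * n - 1), W (p k) ≤ u}

def domP2L (n : ℕ) : Finset (ℕ × ℕ) :=
  (Finset.Icc 1 n ×ˢ Finset.Icc 1 n).filter fun q => q.1 + q.2 ≤ n + 1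

def wtP2L (n : ℕ) (W : ℕ × ℕ → ℕ) : MvPolynomial ℕ ℚ :=
  ∏ q ∈ domP2L n, (MvPolynomial.X q.1 * MvPolynomial.X (n - q.2 + 1)) ^ W q

def PathP2L (n : ℕ) (p : ℕ → ℕ × ℕ) : Prop :=
  p 0 = (1, 1) ∧ (p (n - 1)).1 + (p (n - 1)).2 = n + 1 ∧ UpRight p (n - 1) ∧
    ∀ k ≤ n - 1, p k ∈ domP2L n

def WsetP2L (n v : ℕ) : Set ((ℕ × ℕ) → ℕ) :=
  {W | (∀ q ∉ domP2L n, W q = 0) ∧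
    ∀ p, PathP2L n p → ∑ k ∈ Finset.range n, W (p k) ≤ v}

def domP2HLR (n : ℕ) : Finset (ℕ × ℕ) :=
  (Finset.Icc 1 n ×ˢ Finset.Icc 1 (2 * n)).filter fun q => q.1 ≤ q.2 ∧ q.1 + q.2 ≤ 2 * n + 1

def rowVar (n j : ℕ) : ℕ := if j ≤ n then j else 2 * n + 1 - j

def wtP2HLR (n : ℕ) (W : ℕ × ℕ → ℕ) : MvPolynomial ℕ ℚ :=
  ∏ q ∈ domP2HLR n,
    (if q.1 = q.2 then MvPolynomial.X q.1
      else MvPolynomial.X q.1 * MvPolynomial.X (rowVar n q.2)) ^ W q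

def PathP2HLR (n : ℕ) (p : ℕ → ℕ × ℕ) : Prop :=
  p 0 = (1, 1) ∧ (p (2 * n - 1)).1 + (p (2 * n - 1)).2 = 2 * n + 1 ∧ UpRight p (2 * n - 1) ∧
    ∀ k ≤ 2 * n - 1, p k ∈ domP2HLR n

def WsetP2HLR (n u : ℕ) : Set ((ℕ × ℕ) → ℕ) :=
  {W | (∀ q ∉ domP2HLR n, W q = 0) ∧
    ∀ p, PathP2HLR n p → ∑ k ∈ Finset.range (2 * n), W (p k) ≤ u}

def wtP2HLRlp (n : ℕ) (W : ℕ × ℕ → ℕ) : LP :=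
  ∏ q ∈ domP2HLR n,
    (if q.1 = q.2 then lpX q.1 1 else lpX q.1 1 * lpX (rowVar n q.2) 1) ^ W q

def growRow (w : ℕ → ℕ → ℕ) : ℕ → ℕ → ℕ → ℕ
  | 0, _ => fun _ => 0
  | _ + 1, 0 => fun _ => 0
  | i + 1, j + 1 =>
      rowRSK (growRow w i (j + 1)) (growRow w (i + 1) j) (growRow w i j) (w (i + 1) (j + 1))
  termination_by i j => (i, j)

def growCol (w : ℕ → ℕ → ℕ) : ℕ → ℕ → ℕ → ℕ
  | 0, _ => fun _ => 0
  | _ + 1, 0 => fun _ => 0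
  | i + 1, j + 1 =>
      colRSK (growCol w i (j + 1)) (growCol w (i + 1) j) (growCol w i j) (w (i + 1) (j + 1))
  termination_by i j => (i, j)

/-! Interlacing with `κ` pins `κ s` between `max (α (s + 1)) (β (s + 1))` and `min (α s) (β s)`,
so `rowRSK α β κ G (s + 1)` is `max (α (s + 1)) (β (s + 1))` raised by `min (α s) (β s) - κ s`
without truncation, and it stays below `min (α s) (β s)`. This gives both interlacings, and a
sequence interlacing a partition from above is itself a partition. -/

lemma Interlaces.isPartition {μ lam : ℕ → ℕ} (h : Interlaces μ lam) (hμ : IsPartition μ) :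
    IsPartition lam := by
  obtain ⟨N, hN⟩ := hμ.2
  refine ⟨fun i => (h i).1.trans (h i).2, N + 1, fun i hi => ?_⟩
  obtain ⟨j, rfl⟩ : ∃ j, i = j + 1 := ⟨i - 1, by omega⟩
  exact Nat.eq_zero_of_le_zero ((h j).1.trans (hN j (by omega)).le)

lemma rowRSK_comm (α β κ : ℕ → ℕ) (G : ℕ) : rowRSK α β κ G = rowRSK β α κ G := by
  funext s
  cases s <;> simp only [rowRSK, max_comm, min_comm]

lemma interlaces_rowRSK_left {α β κ : ℕ → ℕ} (hκα : Interlaces κ α) (hκβ : Interlaces κ β)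
    (G : ℕ) : Interlaces α (rowRSK α β κ G) := by
  intro i
  constructor
  · have := hκα i; have := hκβ i
    simp only [rowRSK]; omega
  · cases i with
    | zero => simp only [rowRSK]; omega
    | succ s => have := hκα s; have := hκβ s; simp only [rowRSK]; omega

open Filter MeasureTheory in

theorem stmt0_general (α β κ : ℕ → ℕ) (hα : IsPartition α)
    (hκα : Interlaces κ α) (hκβ : Interlaces κ β) (G : ℕ) :
    IsPartition (rowRSK α β κ G) ∧ Interlaces α (rowRSK α β κ G) ∧
      Interlaces β (rowRSK α β κ G) := by
  have hαν := interlaces_rowRSK_left hκα hκβ G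
  have hβν : Interlaces β (rowRSK α β κ G) :=
    rowRSK_comm α β κ G ▸ interlaces_rowRSK_left hκβ hκα G
  exact ⟨hαν.isPartition hα, hαν, hβν⟩

open Filter MeasureTheory in
theorem stmt0 (α β κ : ℕ → ℕ) (hα : IsPartition α) (hβ : IsPartition β) (hκ : IsPartition κ)
    (hκα : Interlaces κ α) (hκβ : Interlaces κ β) (G : ℕ) :
    IsPartition (rowRSK α β κ G) ∧ Interlaces α (rowRSK α β κ G) ∧
      Interlaces β (rowRSK α β κ G) :=
  stmt0_general α β κ hα hκα hκβ G

end
end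

section
/- Fix partitions α, β. The rowRSK local rule, mapping a pair (κ, G) with α ≻ κ ≺ β and G ∈ ℕ to the partition ν given by ν_1 = max(α_1, β_1) + G and ν_s = max(α_s, β_s) + min(α_{s-1}, β_{s-1}) − κ_{s-1} (s ≥ 2), is a bijection from {(κ, G) : α ≻ κ ≺ β, G ∈ ℕ} onto {ν : α ≺ ν ≻ β}. -/
open scoped Classical

noncomputable section

/-! Both interlacing conditions together say that `κ_s` lies in the interval
`[max (α (s+1)) (β (s+1)), min (α s) (β s)]` and that `ν_{s+1}` lies in the same interval, while
`ν_0 ≥ max (α 0) (β 0)`. The rule sends `κ_s` to its mirror image `ν_{s+1}` in that interval and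
shifts `G` by `max (α 0) (β 0)`; both are invertible. Being a partition is then automatic: the
interlacing partner of a partition is a partition. -/

section RowRSK

variable {α β μ κ ν lam : ℕ → ℕ}

lemma Interlaces.antitone_left (h : Interlaces μ lam) : Antitone μ :=
  antitone_nat_of_succ_le fun i => (h (i + 1)).2.trans (h i).1

lemma Interlaces.antitone_right (h : Interlaces μ lam) : Antitone lam :=
  antitone_nat_of_succ_le fun i => (h i).1.trans (h i).2

lemma Interlaces.isPartition_iff (h : Interlaces μ lam) : IsPartition μ ↔ IsPartition lam := by
  constructor
  · rintro ⟨-, N, hN⟩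
    refine ⟨fun i => h.antitone_right i.le_succ, N + 1, fun i hi => ?_⟩
    obtain ⟨j, rfl⟩ : ∃ j, i = j + 1 := ⟨i - 1, by omega⟩
    exact Nat.eq_zero_of_le_zero ((h j).1.trans (hN j (by omega)).le)
  · rintro ⟨-, N, hN⟩
    exact ⟨fun i => h.antitone_left i.le_succ, N,
      fun i hi => Nat.eq_zero_of_le_zero ((h i).2.trans (hN i hi).le)⟩

lemma interlaces_and_interlaces_iff_left :
    Interlaces μ α ∧ Interlaces μ β ↔
      ∀ i, max (α (i + 1)) (β (i + 1)) ≤ μ i ∧ μ i ≤ min (α i) (β i) := by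
  simp only [Interlaces, max_le_iff, le_min_iff, ← forall_and]
  exact forall_congr' fun i => by tauto

lemma interlaces_and_interlaces_iff_right :
    Interlaces α ν ∧ Interlaces β ν ↔
      ∀ i, max (α i) (β i) ≤ ν i ∧ ν (i + 1) ≤ min (α i) (β i) := by
  simp only [Interlaces, max_le_iff, le_min_iff, ← forall_and]
  exact forall_congr' fun i => by tauto

def rowRSKInv (α β ν : ℕ → ℕ) : (ℕ → ℕ) × ℕ :=
  (fun s => max (α (s + 1)) (β (s + 1)) + min (α s) (β s) - ν (s + 1), ν 0 - max (α 0) (β 0))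

lemma interlaces_rowRSK (hα : Interlaces κ α) (hβ : Interlaces κ β) (G : ℕ) :
    Interlaces α (rowRSK α β κ G) ∧ Interlaces β (rowRSK α β κ G) := by
  have hκ := interlaces_and_interlaces_iff_left.1 ⟨hα, hβ⟩
  refine interlaces_and_interlaces_iff_right.2 fun i => ?_
  cases i with
  | zero => have := hκ 0; simp only [rowRSK]; omega
  | succ s => have := hκ s; have := hκ (s + 1); simp only [rowRSK]; omega

lemma interlaces_rowRSKInv (hα : Interlaces α ν) (hβ : Interlaces β ν) :
    Interlaces (rowRSKInv α β ν).1 α ∧ Interlaces (rowRSKInv α β ν).1 β := by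
  have hν := interlaces_and_interlaces_iff_right.1 ⟨hα, hβ⟩
  refine interlaces_and_interlaces_iff_left.2 fun i => ?_
  have := hν i; have := hν (i + 1); simp only [rowRSKInv]; omega

lemma rowRSKInv_rowRSK (hα : Interlaces κ α) (hβ : Interlaces κ β) (G : ℕ) :
    rowRSKInv α β (rowRSK α β κ G) = (κ, G) := by
  have hκ := interlaces_and_interlaces_iff_left.1 ⟨hα, hβ⟩
  refine Prod.ext (funext fun s => ?_) ?_
  · have := hκ s; simp only [rowRSKInv, rowRSK]; omega
  · simp only [rowRSKInv, rowRSK]; omega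

lemma rowRSK_rowRSKInv (hα : Interlaces α ν) (hβ : Interlaces β ν) :
    rowRSK α β (rowRSKInv α β ν).1 (rowRSKInv α β ν).2 = ν := by
  have hν := interlaces_and_interlaces_iff_right.1 ⟨hα, hβ⟩
  funext i
  cases i with
  | zero => have := hν 0; simp only [rowRSK, rowRSKInv]; omega
  | succ s => have := hν s; have := hν (s + 1); simp only [rowRSK, rowRSKInv]; omega

end RowRSK

open Filter MeasureTheory in

theorem stmt2_general (α β : ℕ → ℕ) :
    Set.BijOn (fun p : (ℕ → ℕ) × ℕ => rowRSK α β p.1 p.2)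
      {p | IsPartition p.1 ∧ Interlaces p.1 α ∧ Interlaces p.1 β}
      {ν | IsPartition ν ∧ Interlaces α ν ∧ Interlaces β ν} := by
  refine Set.InvOn.bijOn (f' := rowRSKInv α β) ⟨?_, ?_⟩ ?_ ?_
  · rintro ⟨κ, G⟩ ⟨-, hκα, hκβ⟩
    exact rowRSKInv_rowRSK hκα hκβ G
  · rintro ν ⟨-, hαν, hβν⟩
    exact rowRSK_rowRSKInv hαν hβν
  · rintro ⟨κ, G⟩ ⟨hκ, hκα, hκβ⟩
    obtain ⟨hαν, hβν⟩ := interlaces_rowRSK hκα hκβ G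
    exact ⟨hαν.isPartition_iff.1 (hκα.isPartition_iff.1 hκ), hαν, hβν⟩
  · rintro ν ⟨hν, hαν, hβν⟩
    obtain ⟨hκα, hκβ⟩ := interlaces_rowRSKInv hαν hβν
    exact ⟨hκα.isPartition_iff.2 (hαν.isPartition_iff.2 hν), hκα, hκβ⟩

open Filter MeasureTheory in
theorem stmt2 (α β : ℕ → ℕ) (hα : IsPartition α) (hβ : IsPartition β) :
    Set.BijOn (fun p : (ℕ → ℕ) × ℕ => rowRSK α β p.1 p.2)
      {p | IsPartition p.1 ∧ Interlaces p.1 α ∧ Interlaces p.1 β}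
      {ν | IsPartition ν ∧ Interlaces α ν ∧ Interlaces β ν} :=
  stmt2_general α β

end
end

section
/- Let α, β, κ be partitions with α ≻ κ ≺ β and G ∈ ℕ. Set ℓ−1 = min(ℓ(α), ℓ(β)), G_ℓ = G, and for s = ℓ, ℓ−1, …, 1 define ν_s = min(max(α_s, β_s) + G_s, κ_{s-1}) (with κ_0 = +∞ interpreted so that ν_1 = max(α_1,β_1)+G_1) and G_{s-1} = G_s − min(G_s, κ_{s-1} − max(α_s, β_s)) + min(α_{s-1}, β_{s-1}) − κ_{s-1}. Then the output ν is a partition satisfying α ≺ ν ≻ β and |κ| + |ν| = |α| + |β| + G. -/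
open scoped Classical

noncomputable section

/-!
Each new part `ν (s + 1) = min (max (α (s + 1)) (β (s + 1)) + G_{s+1}) (κ s)` lies between
`max (α (s + 1)) (β (s + 1))`, which is at most `κ s` by interlacing, and `κ s`; this gives
`α ≺ ν ≻ β`. The carry `G_s` is defined so that, at every row,
`ν (s + 1) + κ s + G_s = max (α (s + 1)) (β (s + 1)) + min (α s) (β s) + G_{s+1}`;
summing these identities telescopes, and `max + min = α + β` turns the result into the
size identity.
-/

lemma IsPartition.eq_zero_of_plen_le {a : ℕ → ℕ} (h : IsPartition a) {i : ℕ} (hi : plen a ≤ i) :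
    a i = 0 :=
  Nat.sInf_mem (s := {N | ∀ i, N ≤ i → a i = 0}) h.2 i hi

lemma psum_eq_sum_range {a : ℕ → ℕ} {N : ℕ} (h : ∀ i, N ≤ i → a i = 0) :
    psum a = ∑ i ∈ Finset.range N, a i :=
  tsum_eq_sum fun i hi => h i (by simpa using hi)

namespace Interlaces

variable {μ lam : ℕ → ℕ}

lemma antitone_left_s4 (h : Interlaces μ lam) : Antitone μ :=
  antitone_nat_of_succ_le fun i => (h (i + 1)).2.trans (h i).1

lemma eq_zero_of_succ_le (h : Interlaces μ lam) {N : ℕ} (hN : ∀ i, N ≤ i → μ i = 0) {i : ℕ}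
    (hi : N + 1 ≤ i) : lam i = 0 := by
  obtain ⟨s, rfl⟩ : ∃ s, i = s + 1 := ⟨i - 1, by omega⟩
  simpa [hN s (by omega)] using (h s).1

lemma isPartition_s4 (h : Interlaces μ lam) {N : ℕ} (hN : ∀ i, N ≤ i → μ i = 0) :
    IsPartition lam :=
  ⟨fun i => (h i).1.trans (h i).2, N + 1, fun _ => h.eq_zero_of_succ_le hN⟩

end Interlaces

section colRSK

variable {α β κ : ℕ → ℕ} {G : ℕ}

lemma min_eq_zero_at_min_plen (hα : IsPartition α) (hβ : IsPartition β) :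
    min (α (min (plen α) (plen β))) (β (min (plen α) (plen β))) = 0 := by
  rcases le_total (plen α) (plen β) with h | h
  · simp [hα.eq_zero_of_plen_le (i := min (plen α) (plen β)) (by omega)]
  · simp [hβ.eq_zero_of_plen_le (i := min (plen α) (plen β)) (by omega)]

lemma eq_zero_of_min_plen_le (hα : IsPartition α) (hβ : IsPartition β)
    (hκα : Interlaces κ α) (hκβ : Interlaces κ β) {i : ℕ} (hi : min (plen α) (plen β) ≤ i) :
    κ i = 0 := by
  have hmono : κ i ≤ κ (min (plen α) (plen β)) := hκα.antitone_left_s4 hi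
  have := min_eq_zero_at_min_plen hα hβ
  have := (hκα (min (plen α) (plen β))).2
  have := (hκβ (min (plen α) (plen β))).2
  omega

lemma colG_of_min_plen_le {s : ℕ} (hs : min (plen α) (plen β) ≤ s) : colG α β κ G s = G := by
  rw [colG, Nat.sub_eq_zero_of_le hs, Gdesc]

lemma colG_of_lt_min_plen {s : ℕ} (hs : s < min (plen α) (plen β)) :
    colG α β κ G s =
      colG α β κ G (s + 1) - min (colG α β κ G (s + 1)) (κ s - max (α (s + 1)) (β (s + 1)))
        + (min (α s) (β s) - κ s) := by
  have hsucc : min (plen α) (plen β) - s = min (plen α) (plen β) - (s + 1) + 1 := by omega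
  have hrow : min (plen α) (plen β) - (min (plen α) (plen β) - (s + 1) + 1) = s := by omega
  rw [colG, hsucc, Gdesc, hrow]
  rfl

lemma interlaces_colRSK (hκα : Interlaces κ α) : Interlaces κ (colRSK α β κ G) := by
  intro i
  cases i with
  | zero =>
    have := (hκα 0).2
    simp only [colRSK]
    omega
  | succ s =>
    have : κ (s + 1) ≤ κ s := hκα.antitone_left_s4 (Nat.le_succ s)
    have := (hκα (s + 1)).2
    simp only [colRSK]
    omega

lemma interlaces_colRSK_of_le_max {γ : ℕ → ℕ} (hκα : Interlaces κ α) (hκγ : Interlaces κ γ)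
    (hγ : ∀ i, γ i ≤ max (α i) (β i)) : Interlaces γ (colRSK α β κ G) := by
  intro i
  refine ⟨(interlaces_colRSK hκα i).1.trans (hκγ i).2, ?_⟩
  cases i with
  | zero =>
    have := hγ 0
    simp only [colRSK]
    omega
  | succ s =>
    have := hγ (s + 1)
    have := (hκγ s).1
    simp only [colRSK]
    omega

lemma colRSK_succ_add_colG (hκα : Interlaces κ α) (hκβ : Interlaces κ β) {s : ℕ}
    (hs : s < min (plen α) (plen β)) :
    colRSK α β κ G (s + 1) + κ s + colG α β κ G s =
      max (α (s + 1)) (β (s + 1)) + min (α s) (β s) + colG α β κ G (s + 1) := by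
  have := hκα s
  have := hκβ s
  rw [colG_of_lt_min_plen hs]
  simp only [colRSK]
  omega

lemma sum_colRSK_add_sum (hκα : Interlaces κ α) (hκβ : Interlaces κ β) {t : ℕ}
    (ht : t ≤ min (plen α) (plen β)) :
    ∑ i ∈ Finset.range (t + 1), colRSK α β κ G i + ∑ i ∈ Finset.range t, κ i + min (α t) (β t) =
      ∑ i ∈ Finset.range (t + 1), (α i + β i) + colG α β κ G t := by
  induction t with
  | zero =>
    simp only [zero_add, Finset.range_one, Finset.sum_singleton, Finset.range_zero,
      Finset.sum_empty, colRSK]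
    omega
  | succ t ih =>
    have hstep := colRSK_succ_add_colG (G := G) hκα hκβ (s := t) (by omega)
    have := ih (by omega)
    rw [Finset.sum_range_succ _ (t + 1), Finset.sum_range_succ κ, Finset.sum_range_succ _ (t + 1)]
    omega

end colRSK

open Filter MeasureTheory in

theorem stmt4_general (α β κ : ℕ → ℕ) (hα : IsPartition α) (hβ : IsPartition β)
    (hκα : Interlaces κ α) (hκβ : Interlaces κ β) (G : ℕ) :
    IsPartition (colRSK α β κ G) ∧ Interlaces α (colRSK α β κ G) ∧
      Interlaces β (colRSK α β κ G) ∧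
      psum κ + psum (colRSK α β κ G) = psum α + psum β + G := by
  set L := min (plen α) (plen β)
  have hκL : ∀ i, L ≤ i → κ i = 0 := fun i hi => eq_zero_of_min_plen_le hα hβ hκα hκβ hi
  have hκν : Interlaces κ (colRSK α β κ G) := interlaces_colRSK hκα
  refine ⟨hκν.isPartition_s4 hκL,
    interlaces_colRSK_of_le_max hκα hκα fun i => le_max_left _ _,
    interlaces_colRSK_of_le_max hκα hκβ fun i => le_max_right _ _, ?_⟩
  have hsum := sum_colRSK_add_sum (G := G) hκα hκβ (t := L) le_rfl
  rw [colG_of_min_plen_le le_rfl, min_eq_zero_at_min_plen hα hβ, add_zero,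
    Finset.sum_add_distrib] at hsum
  rw [psum_eq_sum_range hκL, psum_eq_sum_range fun _ => hκν.eq_zero_of_succ_le hκL,
    psum_eq_sum_range fun _ => hκα.eq_zero_of_succ_le hκL,
    psum_eq_sum_range fun _ => hκβ.eq_zero_of_succ_le hκL]
  omega

open Filter MeasureTheory in
theorem stmt4 (α β κ : ℕ → ℕ) (hα : IsPartition α) (hβ : IsPartition β) (hκ : IsPartition κ)
    (hκα : Interlaces κ α) (hκβ : Interlaces κ β) (G : ℕ) :
    IsPartition (colRSK α β κ G) ∧ Interlaces α (colRSK α β κ G) ∧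
      Interlaces β (colRSK α β κ G) ∧
      psum κ + psum (colRSK α β κ G) = psum α + psum β + G :=
  stmt4_general α β κ hα hβ hκα hκβ G
end
end

section
/- Let (w_{i,j})_{1≤i≤m,1≤j≤n} be non-negative integers and apply the rowRSK local growth rule inductively on the m × n grid starting from empty partitions on the axes, yielding the partition λ = λ^{(m,n)} at the outer corner. Then λ_1 equals the maximum, over up-right lattice paths π from the square (1,1) to the square (m,n), of Σ_{(i,j)∈π} w_{i,j}. -/
/-!
On first parts the rowRSK rule reads `ν₁ = max(α₁, β₁) + G`, so `L(i, j) := λ₁^{(i,j)}` obeys the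
last-passage recursion `L(i, j) = max(L(i-1, j), L(i, j-1)) + w_{i,j}` with `L = 0` on the axes.
Along any up-right path each step adds at most what the recursion adds, so a path sum is bounded by
`L` at its endpoint; conversely, walking back through predecessors attaining the maximum produces
a path whose sum is exactly `L(m, n)`.
-/

open scoped Classical

noncomputable section

/-- `UpRight p L` unfolds to `∀ k < L, IsUpRightStep (p k) (p (k + 1))`. -/
def IsUpRightStep (x y : ℕ × ℕ) : Prop :=
  y = (x.1 + 1, x.2) ∨ y = (x.1, x.2 + 1)

lemma IsUpRightStep.le {x y : ℕ × ℕ} (h : IsUpRightStep x y) : x ≤ y := by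
  rcases h with rfl | rfl <;> constructor <;> simp

lemma UpRight.mono {p : ℕ → ℕ × ℕ} {L L' : ℕ} (h : UpRight p L') (hL : L ≤ L') : UpRight p L :=
  fun k hk => h k (hk.trans_le hL)

lemma UpRight.le_of_le {p : ℕ → ℕ × ℕ} {L j k : ℕ} (h : UpRight p L) (hjk : j ≤ k)
    (hkL : k ≤ L) : p j ≤ p k := by
  induction k, hjk using Nat.le_induction with
  | base => exact le_rfl
  | succ k _ ih => exact (ih (by omega)).trans (IsUpRightStep.le (h k (by omega)))

lemma UpRight.snoc {p : ℕ → ℕ × ℕ} {L : ℕ} {y : ℕ × ℕ} (h : UpRight p L)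
    (hy : IsUpRightStep (p L) y) : UpRight (Function.update p (L + 1) y) (L + 1) := by
  intro k hk
  have hkL : k ≠ L + 1 := by omega
  rcases Nat.lt_succ_iff_lt_or_eq.mp hk with hk | rfl
  · rw [Function.update_of_ne hkL, Function.update_of_ne (show k + 1 ≠ L + 1 by omega)]
    exact h k hk
  · rw [Function.update_of_ne hkL, Function.update_self]
    exact hy

lemma sum_range_update_succ (f : ℕ × ℕ → ℕ) (p : ℕ → ℕ × ℕ) (L : ℕ) (y : ℕ × ℕ) :
    ∑ k ∈ Finset.range (L + 2), f (Function.update p (L + 1) y k)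
      = ∑ k ∈ Finset.range (L + 1), f (p k) + f y := by
  rw [Finset.sum_range_succ, Function.update_self]
  congr 1
  refine Finset.sum_congr rfl fun k hk => ?_
  rw [Function.update_of_ne (by simp at hk; omega)]

section LastPassage

variable (w : ℕ → ℕ → ℕ)

@[simp]
lemma growRow_zero_left (j : ℕ) : growRow w 0 j = 0 := by
  rw [growRow]; rfl

@[simp]
lemma growRow_succ_zero (i : ℕ) : growRow w (i + 1) 0 = 0 := by
  rw [growRow]; rfl

lemma growRow_succ_succ_apply_zero (i j : ℕ) :
    growRow w (i + 1) (j + 1) 0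
      = max (growRow w i (j + 1) 0) (growRow w (i + 1) j 0) + w (i + 1) (j + 1) := by
  rw [growRow]; rfl

lemma growRow_add_le_of_isUpRightStep {x y : ℕ × ℕ} (hxy : IsUpRightStep x y)
    (hx₁ : 1 ≤ x.1) (hx₂ : 1 ≤ x.2) :
    growRow w x.1 x.2 0 + w y.1 y.2 ≤ growRow w y.1 y.2 0 := by
  obtain ⟨a, b⟩ := x
  obtain ⟨b, rfl⟩ : ∃ b', b = b' + 1 := ⟨b - 1, by simp at hx₂; omega⟩
  rcases hxy with rfl | rfl
  · simp [growRow_succ_succ_apply_zero]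
  · obtain ⟨a, rfl⟩ : ∃ a', a = a' + 1 := ⟨a - 1, by simp at hx₁; omega⟩
    simp [growRow_succ_succ_apply_zero]

/-- On the boundary the other candidate in the maximum is `0`. -/
lemma exists_isUpRightStep_growRow_eq {i j : ℕ} (hi : 1 ≤ i) (hj : 1 ≤ j) (hij : 3 ≤ i + j) :
    ∃ x : ℕ × ℕ, IsUpRightStep x (i, j) ∧ 1 ≤ x.1 ∧ 1 ≤ x.2 ∧
      growRow w i j 0 = growRow w x.1 x.2 0 + w i j := by
  obtain ⟨a, rfl⟩ : ∃ a, i = a + 1 := ⟨i - 1, by omega⟩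
  obtain ⟨b, rfl⟩ : ∃ b, j = b + 1 := ⟨j - 1, by omega⟩
  rw [growRow_succ_succ_apply_zero]
  rcases Nat.eq_zero_or_pos a with rfl | ha
  · exact ⟨(1, b), Or.inr rfl, le_rfl, by omega, by simp⟩
  rcases Nat.eq_zero_or_pos b with rfl | hb
  · exact ⟨(a, 1), Or.inl rfl, ha, le_rfl, by simp⟩
  rcases le_total (growRow w a (b + 1) 0) (growRow w (a + 1) b 0) with h | h
  · exact ⟨(a + 1, b), Or.inr rfl, by simp, hb, by simp [h]⟩
  · exact ⟨(a, b + 1), Or.inl rfl, ha, by simp, by simp [h]⟩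

lemma sum_le_growRow_of_upRight {p : ℕ → ℕ × ℕ} {L : ℕ} (hp : UpRight p L) (h0 : p 0 = (1, 1)) :
    ∑ k ∈ Finset.range (L + 1), w (p k).1 (p k).2 ≤ growRow w (p L).1 (p L).2 0 := by
  induction L with
  | zero => simp [h0, growRow_succ_succ_apply_zero]
  | succ L ih =>
    have hpL : (1, 1) ≤ p L := h0 ▸ hp.le_of_le (Nat.zero_le L) L.le_succ
    calc ∑ k ∈ Finset.range (L + 2), w (p k).1 (p k).2
        = ∑ k ∈ Finset.range (L + 1), w (p k).1 (p k).2 + w (p (L + 1)).1 (p (L + 1)).2 :=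
          Finset.sum_range_succ _ _
      _ ≤ growRow w (p L).1 (p L).2 0 + w (p (L + 1)).1 (p (L + 1)).2 :=
          Nat.add_le_add_right (ih (hp.mono L.le_succ)) _
      _ ≤ growRow w (p (L + 1)).1 (p (L + 1)).2 0 :=
          growRow_add_le_of_isUpRightStep w (hp L L.lt_succ_self) hpL.1 hpL.2

lemma exists_upRight_sum_eq_growRow (L : ℕ) {i j : ℕ} (hi : 1 ≤ i) (hj : 1 ≤ j)
    (hij : i + j = L + 2) :
    ∃ p : ℕ → ℕ × ℕ, UpRight p L ∧ p 0 = (1, 1) ∧ p L = (i, j) ∧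
      ∑ k ∈ Finset.range (L + 1), w (p k).1 (p k).2 = growRow w i j 0 := by
  induction L generalizing i j with
  | zero =>
    obtain ⟨rfl, rfl⟩ : i = 1 ∧ j = 1 := by omega
    exact ⟨fun _ => (1, 1), fun k hk => absurd hk k.not_lt_zero, rfl, rfl,
      by simp [growRow_succ_succ_apply_zero]⟩
  | succ L ih =>
    obtain ⟨⟨a, b⟩, hstep, ha, hb, hG⟩ := exists_isUpRightStep_growRow_eq w hi hj (by omega)
    have hab : a + b = L + 2 := by rcases hstep with h | h <;> simp at h <;> omega
    obtain ⟨p, hp, h0, hpL, hsum⟩ := ih ha hb hab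
    refine ⟨Function.update p (L + 1) (i, j), hp.snoc (hpL ▸ hstep),
      by rw [Function.update_of_ne (by omega), h0], Function.update_self .., ?_⟩
    rw [sum_range_update_succ (fun x => w x.1 x.2), hsum, hG]

end LastPassage

open Filter MeasureTheory in
theorem stmt15 (m n : ℕ) (hm : 0 < m) (hn : 0 < n) (w : ℕ → ℕ → ℕ) :
    IsGreatest
      {s : ℕ | ∃ p : ℕ → ℕ × ℕ, UpRight p (m + n - 2) ∧ p 0 = (1, 1) ∧
        p (m + n - 2) = (m, n) ∧
        (∀ k ≤ m + n - 2, 1 ≤ (p k).1 ∧ (p k).1 ≤ m ∧ 1 ≤ (p k).2 ∧ (p k).2 ≤ n) ∧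
        s = ∑ k ∈ Finset.range (m + n - 1), w (p k).1 (p k).2}
      (growRow w m n 0) := by
  have hlen : m + n - 1 = m + n - 2 + 1 := by omega
  refine ⟨?_, ?_⟩
  · obtain ⟨p, hp, h0, hend, hsum⟩ :=
      exists_upRight_sum_eq_growRow w (m + n - 2) hm hn (by omega)
    refine ⟨p, hp, h0, hend, fun k hk => ?_, by rw [hlen, hsum]⟩
    have hlow : (1, 1) ≤ p k := h0 ▸ hp.le_of_le (Nat.zero_le k) hk
    have hhigh : p k ≤ (m, n) := hend ▸ hp.le_of_le hk le_rfl
    exact ⟨hlow.1, hhigh.1, hlow.2, hhigh.2⟩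
  · rintro s ⟨p, hp, h0, hend, -, rfl⟩
    rw [hlen]
    simpa [hend] using sum_le_growRow_of_upRight w hp h0

end
end

section
/- Let M = (M_{i,j})_{1≤i,j≤n} be a symmetric matrix of non-negative integers, and apply the colRSK local growth rule inductively on the n × n grid with empty partitions on the axes, producing partitions μ^{(i,j)}. Then the output sequence along the north and east boundaries is symmetric: μ^{(i,n)} = μ^{(n,i)} for all 0 ≤ i ≤ n. -/
open scoped Classical

noncomputable section

/-! The colRSK rule is symmetric in its two inputs `α`, `β` (everything depends on them only
through `max`, `min` and `min (plen α) (plen β)`), so transposing the weight matrix transposes the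
whole growth diagram: `μ^{(i,j)} = μ^{(j,i)}` on the grid, by induction from the axes. -/

lemma Gdesc_comm (α β κ : ℕ → ℕ) (G L k : ℕ) : Gdesc α β κ G L k = Gdesc β α κ G L k := by
  induction k with
  | zero => rfl
  | succ k ih => rw [Gdesc, Gdesc, ih, max_comm (α _), min_comm (α _)]

lemma colG_comm (α β κ : ℕ → ℕ) (G s : ℕ) : colG α β κ G s = colG β α κ G s := by
  rw [colG, colG, min_comm (plen α), Gdesc_comm]

lemma colRSK_comm (α β κ : ℕ → ℕ) (G : ℕ) : colRSK α β κ G = colRSK β α κ G := by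
  funext s
  cases s <;> rw [colRSK, colRSK, colG_comm, max_comm (α _)]

theorem growCol_transpose {n : ℕ} {w : ℕ → ℕ → ℕ}
    (hw : ∀ i j, 1 ≤ i → i ≤ n → 1 ≤ j → j ≤ n → w i j = w j i) :
    ∀ i j, i ≤ n → j ≤ n → growCol w i j = growCol w j i
  | 0, 0, _, _ => rfl
  | 0, _ + 1, _, _ | _ + 1, 0, _, _ => by rw [growCol, growCol]
  | i + 1, j + 1, hi, hj => by
    have hi' : i ≤ n := by omega
    have hj' : j ≤ n := by omega
    rw [growCol, growCol, growCol_transpose hw i (j + 1) hi' hj, growCol_transpose hw (i + 1) j hi hj',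
      growCol_transpose hw i j hi' hj', hw (i + 1) (j + 1) (by omega) hi (by omega) hj, colRSK_comm]

open Filter MeasureTheory in

theorem stmt18_general (n : ℕ) (M : ℕ → ℕ → ℕ)
    (hsym : ∀ i j, 1 ≤ i → i ≤ n → 1 ≤ j → j ≤ n → M i j = M j i) :
    ∀ i ≤ n, growCol M i n = growCol M n i :=
  fun i hi => growCol_transpose hsym i n hi le_rfl

open Filter MeasureTheory in
theorem stmt18 (n : ℕ) (hn : 0 < n) (M : ℕ → ℕ → ℕ)
    (hsym : ∀ i j, 1 ≤ i → i ≤ n → 1 ≤ j → j ≤ n → M i j = M j i) :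
    ∀ i ≤ n, growCol M i n = growCol M n i :=
  stmt18_general n M hsym

end
end
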